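/- Let u_k' be a sequence of functions on ℂ converging weakly in W^{1,2}_{loc} to a harmonic function u', with −Δu_k' = K_k e^{2u_k'} where K_k e^{2u_k'} → 0 in L¹_{loc}, and suppose ∫_{D₁} |∇u_k'|² ≥ ε₀² for all k and u_k' → u' strongly in L²_{loc} with u' constant. Then ε₀² ≤ limsup_k ∫_ℂ η|∇u_k'|² = 0 for a cutoff η ∈ C_c^∞ with η ≡ 1 on D₁, a contradiction; i.e. under these hypotheses no such sequence exists. -/

import Mathlib

/-! Testing `-Δu_k = K_k e^{2u_k}` against `η (u_k - c)`, where `η` is a cutoff equal to `1` on the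
unit disc and `c` is the constant value of `u'`, gives
`∫ η |∇u_k|² = -∫ (u_k - c) (η Δu_k + ∇η · ∇u_k)`.
The first term is at most `sup |u_k - c| · ‖K_k e^{2u_k}‖_{L¹} → 0`, and by Cauchy–Schwarz the
second is at most `‖∇η‖_∞ ‖u_k - c‖_{L²} ‖∇u_k‖_{L²} → 0`. So the energy of `u_k` on the unit
disc, which is at least `ε₀²`, tends to `0`. -/

open Real MeasureTheory Metric Filter

/-- The Laplacian on `ℂ ≅ ℝ²`, as the sum of the second derivatives in the directions
`1` and `I`. -/
noncomputable def lapC (u : ℂ → ℝ) (z : ℂ) : ℝ :=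
  (fderiv ℝ (fun w => fderiv ℝ u w 1) z) 1 +
    (fderiv ℝ (fun w => fderiv ℝ u w Complex.I) z) Complex.I

open scoped Gradient InnerProductSpace

theorem integral_mul_le_sqrt_mul_sqrt {α : Type*} [MeasurableSpace α] {ν : Measure α}
    {f g : α → ℝ} (hf0 : 0 ≤ᵐ[ν] f) (hg0 : 0 ≤ᵐ[ν] g) (hf : MemLp f 2 ν) (hg : MemLp g 2 ν) :
    ∫ x, f x * g x ∂ν ≤ √(∫ x, f x ^ 2 ∂ν) * √(∫ x, g x ^ 2 ∂ν) := by
  have h := integral_mul_le_Lp_mul_Lq_of_nonneg Real.HolderConjugate.two_two hf0 hg0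
    (by simpa using hf) (by simpa using hg)
  simpa only [Real.sqrt_eq_rpow, Real.rpow_two, one_div] using h

section Integrals

variable {X : Type*} [MetricSpace X] [ProperSpace X] [MeasurableSpace X] [BorelSpace X]
  {μ : Measure X} [IsFiniteMeasureOnCompacts μ]

theorem Continuous.integrableOn_ball {f : X → ℝ} (hf : Continuous f) (a : X) (R : ℝ) :
    IntegrableOn f (ball a R) μ :=
  (hf.continuousOn.integrableOn_compact (isCompact_closedBall a R)).mono_set
    ball_subset_closedBall

theorem Continuous.memLp_restrict_ball {f : X → ℝ} (hf : Continuous f) (a : X) (R : ℝ)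
    (p : ENNReal) : MemLp f p (μ.restrict (ball a R)) := by
  have : IsFiniteMeasure (μ.restrict (ball a R)) :=
    isFiniteMeasure_restrict.2 (measure_ball_lt_top (μ := μ)).ne
  obtain ⟨C, hC⟩ := (isCompact_closedBall a R).exists_bound_of_continuousOn hf.continuousOn
  refine .of_bound hf.aestronglyMeasurable C ((ae_restrict_iff' measurableSet_ball).2 ?_)
  exact .of_forall fun x hx => hC x (ball_subset_closedBall hx)

end Integrals

theorem setIntegral_le_integral_mul {X : Type*} [TopologicalSpace X] [MeasurableSpace X]
    [OpensMeasurableSpace X] {μ : Measure X} [IsFiniteMeasureOnCompacts μ] {η g : X → ℝ}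
    {s : Set X} (hs : MeasurableSet s) (hη : Continuous η) (hηc : HasCompactSupport η)
    (hη0 : 0 ≤ η) (hηs : Set.EqOn η 1 s) (hg : Continuous g) (hg0 : 0 ≤ g) :
    ∫ x in s, g x ∂μ ≤ ∫ x, η x * g x ∂μ := by
  calc ∫ x in s, g x ∂μ = ∫ x in s, η x * g x ∂μ :=
        setIntegral_congr_fun hs fun x hx => by simp [hηs hx]
    _ ≤ ∫ x, η x * g x ∂μ :=
        setIntegral_le_integral ((hη.mul hg).integrable_of_hasCompactSupport hηc.mul_right)
          (.of_forall fun x => mul_nonneg (hη0 x) (hg0 x))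

theorem ContDiff.fderiv_apply_const {E F : Type*} [NormedAddCommGroup E] [NormedSpace ℝ E]
    [NormedAddCommGroup F] [NormedSpace ℝ F] {w : E → F} (hw : ContDiff ℝ 2 w) (v : E) :
    ContDiff ℝ 1 fun y => fderiv ℝ w y v :=
  (hw.fderiv_right (m := 1) (by norm_num)).clm_apply contDiff_const

theorem integral_mul_fderiv_fderiv_eq_neg {E : Type*} [NormedAddCommGroup E] [NormedSpace ℝ E]
    [FiniteDimensional ℝ E] [MeasurableSpace E] [BorelSpace E] {μ : Measure E}
    [μ.IsAddHaarMeasure] {φ w : E → ℝ} (hφ : ContDiff ℝ 1 φ) (hφc : HasCompactSupport φ)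
    (hw : ContDiff ℝ 2 w) (v : E) :
    ∫ x, φ x * fderiv ℝ (fun y => fderiv ℝ w y v) x v ∂μ =
      -∫ x, fderiv ℝ φ x v * fderiv ℝ w x v ∂μ := by
  have hwv := hw.fderiv_apply_const v
  have hφ' : Continuous fun x => fderiv ℝ φ x v :=
    (hφ.continuous_fderiv one_ne_zero).clm_apply continuous_const
  have hwv' : Continuous fun x => fderiv ℝ (fun y => fderiv ℝ w y v) x v :=
    (hwv.continuous_fderiv one_ne_zero).clm_apply continuous_const
  exact integral_mul_fderiv_eq_neg_fderiv_mul_of_integrable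
    ((hφ'.mul hwv.continuous).integrable_of_hasCompactSupport (hφc.fderiv_apply ℝ v).mul_right)
    ((hφ.continuous.mul hwv').integrable_of_hasCompactSupport hφc.mul_right)
    ((hφ.continuous.mul hwv.continuous).integrable_of_hasCompactSupport hφc.mul_right)
    (fun x _ => hφ.differentiable one_ne_zero x) (fun x _ => hwv.differentiable one_ne_zero x)

theorem Complex.inner_gradient_gradient (f g : ℂ → ℝ) (z : ℂ) :
    ⟪∇ f z, ∇ g z⟫_ℝ =
      fderiv ℝ f z 1 * fderiv ℝ g z 1 + fderiv ℝ f z Complex.I * fderiv ℝ g z Complex.I := by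
  simp only [Complex.inner, ← inner_gradient_left]
  simp only [mul_re, conj_re, conj_im, mul_neg, sub_neg_eq_add, one_mul, I_re, zero_mul, I_im,
    zero_add]
  ring

theorem ContDiff.continuous_gradient {F : Type*} [NormedAddCommGroup F] [InnerProductSpace ℝ F]
    [CompleteSpace F] {f : F → ℝ} {n : WithTop ℕ∞} (hf : ContDiff ℝ n f) (hn : n ≠ 0) :
    Continuous (∇ f) :=
  (InnerProductSpace.toDual ℝ F).symm.continuous.comp (hf.continuous_fderiv hn)

theorem HasCompactSupport.gradient {F : Type*} [NormedAddCommGroup F] [InnerProductSpace ℝ F]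
    [CompleteSpace F] {f : F → ℝ} (hf : HasCompactSupport f) : HasCompactSupport (∇ f) :=
  (hf.fderiv ℝ).comp_left (map_zero _)

theorem continuous_lapC {w : ℂ → ℝ} (hw : ContDiff ℝ 2 w) : Continuous (lapC w) := by
  have h (v : ℂ) : Continuous fun z => fderiv ℝ (fun y => fderiv ℝ w y v) z v :=
    ((hw.fderiv_apply_const v).continuous_fderiv one_ne_zero).clm_apply continuous_const
  exact (h 1).add (h Complex.I)

theorem integral_mul_lapC_eq_neg_integral_inner_gradient {φ w : ℂ → ℝ} (hφ : ContDiff ℝ 1 φ)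
    (hφc : HasCompactSupport φ) (hw : ContDiff ℝ 2 w) :
    ∫ z, φ z * lapC w z = -∫ z, ⟪∇ φ z, ∇ w z⟫_ℝ := by
  have hQ (v : ℂ) : Integrable fun z => φ z * fderiv ℝ (fun y => fderiv ℝ w y v) z v :=
    (hφ.continuous.mul (((hw.fderiv_apply_const v).continuous_fderiv one_ne_zero).clm_apply
      continuous_const)).integrable_of_hasCompactSupport hφc.mul_right
  have hP (v : ℂ) : Integrable fun z => fderiv ℝ φ z v * fderiv ℝ w z v :=
    (((hφ.continuous_fderiv one_ne_zero).clm_apply continuous_const).mul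
      ((hw.continuous_fderiv two_ne_zero).clm_apply
        continuous_const)).integrable_of_hasCompactSupport (hφc.fderiv_apply ℝ v).mul_right
  simp only [lapC, mul_add, Complex.inner_gradient_gradient]
  rw [integral_add (hQ 1) (hQ Complex.I), integral_add (hP 1) (hP Complex.I),
    integral_mul_fderiv_fderiv_eq_neg hφ hφc hw, integral_mul_fderiv_fderiv_eq_neg hφ hφc hw]
  ring

theorem integral_mul_norm_gradient_sq_eq {η w : ℂ → ℝ} (hη : ContDiff ℝ 1 η)
    (hηc : HasCompactSupport η) (hw : ContDiff ℝ 2 w) (c : ℝ) :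
    ∫ z, η z * ‖∇ w z‖ ^ 2 =
      -∫ z, (w z - c) * (η z * lapC w z + ⟪∇ η z, ∇ w z⟫_ℝ) := by
  have hw1 : ContDiff ℝ 1 w := hw.of_le (by norm_num)
  have hφ : ContDiff ℝ 1 fun z => η z * (w z - c) := hη.mul (hw1.sub contDiff_const)
  have hgrad (z : ℂ) : ⟪∇ (fun y => η y * (w y - c)) z, ∇ w z⟫_ℝ =
      η z * ‖∇ w z‖ ^ 2 + (w z - c) * ⟪∇ η z, ∇ w z⟫_ℝ := by
    rw [inner_gradient_left, fderiv_fun_mul (hη.differentiable one_ne_zero z)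
      ((hw1.differentiable one_ne_zero z).sub_const c), fderiv_sub_const]
    simp only [add_apply, smul_apply, smul_eq_mul, ← inner_gradient_left,
      real_inner_self_eq_norm_sq]
  have h := integral_mul_lapC_eq_neg_integral_inner_gradient hφ hηc.mul_right hw
  have hA : Integrable fun z => η z * ‖∇ w z‖ ^ 2 :=
    (hη.continuous.mul ((hw.continuous_gradient two_ne_zero).norm.pow
      2)).integrable_of_hasCompactSupport hηc.mul_right
  have hInner : HasCompactSupport fun z => ⟪∇ η z, ∇ w z⟫_ℝ :=
    hηc.gradient.mono' fun z hz => subset_tsupport _ fun h0 => hz (by simp [h0])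
  have hB : Integrable fun z => (w z - c) * ⟪∇ η z, ∇ w z⟫_ℝ :=
    ((hw.continuous.sub continuous_const).mul ((hη.continuous_gradient one_ne_zero).inner
      (hw.continuous_gradient two_ne_zero))).integrable_of_hasCompactSupport hInner.mul_left
  have hC : Integrable fun z => (w z - c) * (η z * lapC w z) :=
    ((hw.continuous.sub continuous_const).mul (hη.continuous.mul
      (continuous_lapC hw))).integrable_of_hasCompactSupport hηc.mul_right.mul_left
  simp only [hgrad, integral_add hA hB] at h
  simp only [mul_add, integral_add hC hB]
  have hCeq : ∫ z, (w z - c) * (η z * lapC w z) = ∫ z, η z * (w z - c) * lapC w z := by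
    congr 1; ext z; ring
  linarith

theorem gradient_eq_zero_of_notMem_tsupport {F : Type*} [NormedAddCommGroup F]
    [InnerProductSpace ℝ F] [CompleteSpace F] {f : F → ℝ} {x : F} (hx : x ∉ tsupport f) :
    ∇ f x = 0 := by
  simp [gradient, fderiv_of_notMem_tsupport ℝ hx]

theorem integral_mul_norm_gradient_sq_le {η w : ℂ → ℝ} {a : ℂ} {R M B : ℝ} (c : ℝ)
    (hη : ContDiff ℝ 1 η) (hηR : tsupport η ⊆ ball a R) (hη1 : ∀ z, |η z| ≤ 1)
    (hM : ∀ z, ‖∇ η z‖ ≤ M) (hw : ContDiff ℝ 2 w) (hB : ∀ z ∈ ball a R, |w z - c| ≤ B) :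
    ∫ z, η z * ‖∇ w z‖ ^ 2 ≤ B * (∫ z in ball a R, |lapC w z|) +
      M * (√(∫ z in ball a R, (w z - c) ^ 2) * √(∫ z in ball a R, ‖∇ w z‖ ^ 2)) := by
  have hηc : HasCompactSupport η := (isCompact_closedBall a R).of_isClosed_subset
    (isClosed_tsupport η) (hηR.trans ball_subset_closedBall)
  have hM0 : 0 ≤ M := (norm_nonneg _).trans (hM 0)
  have hwc : Continuous fun z => w z - c := hw.continuous.sub continuous_const
  set F := fun z => (w z - c) * (η z * lapC w z + ⟪∇ η z, ∇ w z⟫_ℝ)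
  have hF : ∀ z ∉ ball a R, F z = 0 := fun z hz => by
    have hz' : z ∉ tsupport η := fun h => hz (hηR h)
    simp [F, image_eq_zero_of_notMem_tsupport hz', gradient_eq_zero_of_notMem_tsupport hz']
  have hFle : ∀ z ∈ ball a R, |F z| ≤ B * |lapC w z| + M * (|w z - c| * ‖∇ w z‖) := by
    intro z hz
    have hB0 : 0 ≤ B := (abs_nonneg _).trans (hB z hz)
    calc |F z| ≤ |w z - c| * (|η z| * |lapC w z| + ‖∇ η z‖ * ‖∇ w z‖) := by
          simp only [F, abs_mul]
          gcongr
          exact (abs_add_le _ _).trans (by rw [abs_mul]; gcongr; exact abs_real_inner_le_norm _ _)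
      _ ≤ B * (1 * |lapC w z|) + |w z - c| * (M * ‖∇ w z‖) := by
          rw [mul_add]
          gcongr
          · exact hB z hz
          · exact hη1 z
          · exact hM z
      _ = B * |lapC w z| + M * (|w z - c| * ‖∇ w z‖) := by ring
  have hΔ : IntegrableOn (fun z => |lapC w z|) (ball a R) :=
    (continuous_lapC hw).abs.integrableOn_ball a R
  have hprod : IntegrableOn (fun z => |w z - c| * ‖∇ w z‖) (ball a R) :=
    (hwc.abs.mul (hw.continuous_gradient two_ne_zero).norm).integrableOn_ball a R
  have hCS := integral_mul_le_sqrt_mul_sqrt (ν := volume.restrict (ball a R))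
    (.of_forall fun z => abs_nonneg (w z - c)) (.of_forall fun z => norm_nonneg (∇ w z))
    (hwc.abs.memLp_restrict_ball a R 2)
    ((hw.continuous_gradient two_ne_zero).norm.memLp_restrict_ball a R 2)
  simp only [sq_abs] at hCS
  calc ∫ z, η z * ‖∇ w z‖ ^ 2 = -∫ z, F z := integral_mul_norm_gradient_sq_eq hη hηc hw c
    _ ≤ ∫ z, |F z| := (neg_le_abs _).trans (abs_integral_le_integral_abs)
    _ = ∫ z in ball a R, |F z| :=
        (setIntegral_eq_integral_of_forall_compl_eq_zero fun z hz => by simp [hF z hz]).symm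
    _ ≤ ∫ z in ball a R, (B * |lapC w z| + M * (|w z - c| * ‖∇ w z‖)) := by
        refine setIntegral_mono_on ?_ ?_ measurableSet_ball hFle
        · exact (hwc.mul ((hη.continuous.mul (continuous_lapC hw)).add
            ((hη.continuous_gradient one_ne_zero).inner
              (hw.continuous_gradient two_ne_zero)))).abs.integrableOn_ball a R
        · exact (hΔ.const_mul B).add (hprod.const_mul M)
    _ = B * (∫ z in ball a R, |lapC w z|) + M * ∫ z in ball a R, |w z - c| * ‖∇ w z‖ := by
        rw [integral_add (hΔ.const_mul B) (hprod.const_mul M), integral_const_mul,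
          integral_const_mul]
    _ ≤ _ := add_le_add_right (mul_le_mul_of_nonneg_left hCS hM0) _

theorem stmt_18 (ε₀ : ℝ) (hε₀ : 0 < ε₀)
    (u : ℕ → ℂ → ℝ) (K : ℕ → ℂ → ℝ) (u' : ℂ → ℝ)
    (hsm : ∀ k, ContDiff ℝ 2 (u k))
    -- the equation `−Δu_k = K_k e^{2u_k}`
    (heq : ∀ k z, -lapC (u k) z = K k z * Real.exp (2 * u k z))
    -- `u'` is constant
    (hconst : ∃ c : ℝ, ∀ z, u' z = c)
    -- `K_k e^{2u_k} → 0` in `L¹_loc`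
    (hL1 : ∀ R : ℝ, 0 < R →
      Tendsto (fun k => ∫ z in ball (0 : ℂ) R, |K k z| * Real.exp (2 * u k z)) atTop (nhds 0))
    -- `u_k → u'` strongly in `L²_loc`
    (hL2 : ∀ R : ℝ, 0 < R →
      Tendsto (fun k => ∫ z in ball (0 : ℂ) R, (u k z - u' z) ^ 2) atTop (nhds 0))
    -- local uniform (`L^∞_loc`) bounds on `u_k`
    (hLinf : ∀ R : ℝ, 0 < R → ∃ C : ℝ, ∀ k, ∀ z ∈ ball (0 : ℂ) R, |u k z| ≤ C)
    -- local `W^{1,2}` bounds (weak `W^{1,2}_loc` convergence)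
    (hW12 : ∀ R : ℝ, 0 < R → ∃ C : ℝ, ∀ k,
      (∫ z in ball (0 : ℂ) R, ‖gradient (u k) z‖ ^ 2) ≤ C)
    -- the energy lower bound on the unit disc
    (hen : ∀ k, ε₀ ^ 2 ≤ ∫ z in ball (0 : ℂ) 1, ‖gradient (u k) z‖ ^ 2) :
    False := by
  obtain ⟨c, hc⟩ := hconst
  let η : ContDiffBump (0 : ℂ) := ⟨1, 2, one_pos, one_lt_two⟩
  have hη : ContDiff ℝ 1 η := η.contDiff
  have hηR : tsupport η ⊆ ball 0 3 := η.tsupport_eq ▸ closedBall_subset_ball (by norm_num)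
  obtain ⟨M, hM⟩ := (hη.continuous_gradient one_ne_zero).bounded_above_of_compact_support
    η.hasCompactSupport.gradient
  have hM0 : 0 ≤ M := (norm_nonneg _).trans (hM 0)
  obtain ⟨C, hC⟩ := hLinf 3 (by norm_num)
  obtain ⟨G, hG⟩ := hW12 3 (by norm_num)
  set A := fun k => ∫ z in ball (0 : ℂ) 3, |K k z| * Real.exp (2 * u k z)
  set L := fun k => ∫ z in ball (0 : ℂ) 3, (u k z - c) ^ 2
  have hlap (k : ℕ) : ∫ z in ball (0 : ℂ) 3, |lapC (u k) z| = A k := by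
    refine integral_congr_ae (.of_forall fun z => ?_)
    change |lapC (u k) z| = |K k z| * Real.exp (2 * u k z)
    rw [← abs_neg, heq, abs_mul, abs_of_pos (Real.exp_pos _)]
  have hupper (k : ℕ) : ∫ z, η z * ‖∇ (u k) z‖ ^ 2 ≤ (C + |c|) * A k + M * (√(L k) * √G) := by
    refine (integral_mul_norm_gradient_sq_le c hη hηR
      (fun _ => (abs_of_nonneg η.nonneg).trans_le η.le_one) hM (hsm k)
      fun z hz => (abs_sub _ _).trans (add_le_add (hC k z hz) le_rfl)).trans ?_
    rw [hlap k]
    gcongr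
    exact hG k
  have hlower (k : ℕ) : ε₀ ^ 2 ≤ ∫ z, η z * ‖∇ (u k) z‖ ^ 2 :=
    (hen k).trans <| setIntegral_le_integral_mul measurableSet_ball hη.continuous
      η.hasCompactSupport (fun _ => η.nonneg)
      (fun z hz => η.one_of_mem_closedBall (ball_subset_closedBall hz))
      (((hsm k).continuous_gradient two_ne_zero).norm.pow 2) fun _ => by positivity
  have hlim : Tendsto (fun k => (C + |c|) * A k + M * (√(L k) * √G)) atTop (nhds 0) := by
    have hL : Tendsto L atTop (nhds 0) := by simpa only [hc] using hL2 3 (by norm_num)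
    simpa using ((hL1 3 (by norm_num)).const_mul (C + |c|)).add
      ((hL.sqrt.mul_const √G).const_mul M)
  have := ge_of_tendsto' hlim fun k => (hlower k).trans (hupper k)
  nlinarith
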